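/- arXiv:1405.3194 — 4 statements merged into one kernel-verified Lean document; each statement's English description precedes it below -/
import Mathlib

section
/- For every positive integer k, ∑_{n=1}^{2k-1} (-1)^n * sin(π n² / (2(2k-1))) = (-1)^k * (1 + √(2k-1))/2. -/
/-!
With `m = 2k - 1`, everything reduces to the quadratic Gauss sum
`∑_{r < 2m} exp(π i r² / 2m) = √(2m) exp(π i / 4)`. To evaluate it, look at `θ(0, τ)` for
`τ = 1/(2m) + i/((2m)² t)`. Splitting the theta series by residues mod `2m` and applying the
functional equation to each piece gives `√t ∑_r exp(π i r² / 2m) θ(r/2m, i t)`; on the other hand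
`τ ↦ τ / (1 - 2mτ)` (an inversion, a translation by `2m`, another inversion) carries `τ` to
`-1/(2m) + i t`. As `t → ∞` every theta value tends to `1`, which yields the Gauss sum.

Its real part is `∑_{r < 2m} cos(π r² / 2m) = √m`. The summand is symmetric under `r ↦ 2m - r`
and vanishes at `r = m` because `m` is odd, so the half sum over `r < m` is `(1 + √m) / 2`.
Finally `n ↦ m - n` turns `(-1)ⁿ sin(π n² / 2m)` into `(-1)ᵏ cos(π (m - n)² / 2m)`.
-/

open Finset Real Complex Filter Topology

lemma mul_cpow_of_re_pos {a b : ℂ} (ha : 0 < a.re) (hb : 0 < b.re) (s : ℂ) :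
    (a * b) ^ s = a ^ s * b ^ s := by
  have ha₀ : a ≠ 0 := fun h => by simp [h] at ha
  have hb₀ : b ≠ 0 := fun h => by simp [h] at hb
  have harg := abs_lt.mp (abs_arg_lt_pi_div_two_iff.mpr (Or.inl ha))
  have hbrg := abs_lt.mp (abs_arg_lt_pi_div_two_iff.mpr (Or.inl hb))
  rw [cpow_def_of_ne_zero (mul_ne_zero ha₀ hb₀), cpow_def_of_ne_zero ha₀,
    cpow_def_of_ne_zero hb₀, log_mul ha₀ hb₀ ⟨by linarith, by linarith⟩, add_mul, Complex.exp_add]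

lemma neg_I_mul_ofReal_cpow_one_half {x : ℝ} (hx : 0 < x) :
    (-I * x) ^ (1 / 2 : ℂ) = √x * cexp (-(π * I / 4)) := by
  rw [cpow_def_of_ne_zero (by simp [hx.ne']), log_mul_ofReal x hx _ (by simp), log_neg_I,
    Real.sqrt_eq_rpow, rpow_def_of_pos hx, ofReal_exp, ← Complex.exp_add]
  push_cast
  ring_nf

lemma jacobiTheta₂_term_mul_add (N : ℕ) (q r : ℤ) (z τ : ℂ) :
    jacobiTheta₂_term (q * N + r) z τ =
      jacobiTheta₂_term r z τ * jacobiTheta₂_term q (N * z + N * r * τ) (N ^ 2 * τ) := by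
  simp only [jacobiTheta₂_term, ← Complex.exp_add]
  congr 1
  push_cast
  ring

lemma jacobiTheta₂_eq_sum_range (N : ℕ) [NeZero N] (z : ℂ) {τ : ℂ} (hτ : 0 < τ.im) :
    jacobiTheta₂ z τ = ∑ r ∈ range N,
      jacobiTheta₂_term r z τ * jacobiTheta₂ (N * z + N * r * τ) (N ^ 2 * τ) := by
  -- `e (r, q) = q * N + r`
  let e : Fin N × ℤ ≃ ℤ := (Equiv.prodComm _ _).trans (Int.divModEquiv N).symm
  have hN : 0 < (N ^ 2 * τ : ℂ).im := by
    rw [← ofReal_natCast, ← ofReal_pow, im_ofReal_mul]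
    exact mul_pos (pow_pos (Nat.cast_pos.mpr (NeZero.pos N)) 2) hτ
  have hfiber (r : Fin N) : HasSum (fun q : ℤ => jacobiTheta₂_term (e (r, q)) z τ)
      (jacobiTheta₂_term r z τ * jacobiTheta₂ (N * z + N * r * τ) (N ^ 2 * τ)) := by
    simpa [e, jacobiTheta₂_term_mul_add] using
      (hasSum_jacobiTheta₂_term _ hN).mul_left (jacobiTheta₂_term r z τ)
  rw [← Fin.sum_univ_eq_sum_range
    (fun r : ℕ => jacobiTheta₂_term r z τ * jacobiTheta₂ (N * z + N * r * τ) (N ^ 2 * τ))]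
  exact ((e.hasSum_iff.mpr (hasSum_jacobiTheta₂_term z hτ)).prod_fiberwise hfiber).unique
    (hasSum_fintype _)

lemma jacobiTheta₂_functional_equation_I_div (x : ℂ) {t : ℝ} (ht : 0 < t) :
    jacobiTheta₂ (x * I / t) (I / t) =
      √t * cexp (π * x ^ 2 / t) * jacobiTheta₂ x (t * I) := by
  have ht₀ : (t : ℂ) ≠ 0 := by exact_mod_cast ht.ne'
  have hsqrt : (-I * (I / t)) ^ (1 / 2 : ℂ) = (√t)⁻¹ := by
    rw [show -I * (I / t) = ((t⁻¹ : ℝ) : ℂ) by push_cast; field_simp; simp,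
      show (1 / 2 : ℂ) = ((1 / 2 : ℝ) : ℂ) by push_cast; rfl, ← ofReal_cpow (by positivity),
      Real.sqrt_eq_rpow, Real.inv_rpow ht.le, ofReal_inv]
  have hexp : -π * I * (x * I / t) ^ 2 / (I / t) = π * x ^ 2 / t := by
    field_simp; ring_nf; simp [I_sq]
  have hz : x * I / t / (I / t) = x := by field_simp
  have hτ : -1 / (I / t) = t * I := by field_simp; simp
  rw [jacobiTheta₂_functional_equation, hsqrt, hexp, hz, hτ, ofReal_inv, one_div, inv_inv]

lemma jacobiTheta₂_zero_div_one_sub (m : ℤ) {τ : ℂ} (hτ : 0 < τ.im) :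
    jacobiTheta₂ 0 (τ / (1 - 2 * m * τ)) =
      (1 - 2 * m * τ) ^ (1 / 2 : ℂ) * jacobiTheta₂ 0 τ := by
  have hτ₀ : τ ≠ 0 := fun h => by simp [h] at hτ
  set w := -1 / τ + m * 2 with hw
  have hw_im : 0 < w.im := by simpa [hw, div_im, neg_div] using div_pos hτ (normSq_pos.mpr hτ₀)
  have hw₀ : w ≠ 0 := fun h => by simp [h] at hw_im
  have hFE (σ : ℂ) :
      jacobiTheta₂ 0 σ = ((-I * σ) ^ (1 / 2 : ℂ))⁻¹ * jacobiTheta₂ 0 (-1 / σ) := by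
    simpa using jacobiTheta₂_functional_equation 0 σ
  have hper : jacobiTheta₂ 0 w = jacobiTheta₂ 0 (-1 / τ) :=
    Function.Periodic.int_mul (jacobiTheta₂_add_right 0) m _
  have hprod : 1 - 2 * m * τ = (-I * τ) * (-I * w) := by
    rw [hw]; field_simp; ring_nf; simp [I_sq]; ring
  have hinv : -1 / w = τ / (1 - 2 * m * τ) := by
    rw [hprod]
    field_simp
    ring_nf
    simp [I_sq]
  have hne : (1 - 2 * m * τ) ^ (1 / 2 : ℂ) ≠ 0 :=
    cpow_ne_zero_iff.mpr <| .inl <| hprod ▸ mul_ne_zero (by simpa using hτ₀) (by simpa using hw₀)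
  rw [hFE τ, ← hper, hFE w, hinv, ← mul_assoc ((-I * τ) ^ (1 / 2 : ℂ))⁻¹, ← mul_inv,
    ← mul_cpow_of_re_pos (by simpa using hτ) (by simpa using hw_im), ← hprod,
    mul_inv_cancel_left₀ hne]

lemma tendsto_jacobiTheta₂_add_mul_I_atTop (z σ : ℝ) :
    Tendsto (fun t : ℝ => jacobiTheta₂ z (σ + t * I)) atTop (𝓝 1) := by
  have hnorm (n : ℤ) (t : ℝ) :
      ‖jacobiTheta₂_term n z (σ + t * I)‖ = rexp (-π * n ^ 2 * t) := by
    simp [norm_jacobiTheta₂_term]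
  have hbound : Summable fun n : ℤ => rexp (-π * n ^ 2) := by
    have := ((summable_jacobiTheta₂_term_iff z (σ + ((1 : ℝ) : ℂ) * I)).mpr (by simp)).norm
    exact this.congr fun n => by rw [hnorm, mul_one]
  have hlim (n : ℤ) : Tendsto (fun t : ℝ => jacobiTheta₂_term n z (σ + t * I)) atTop
      (𝓝 (if n = 0 then 1 else 0)) := by
    split_ifs with hn
    · simp [hn, jacobiTheta₂_term]
    · rw [tendsto_zero_iff_norm_tendsto_zero]
      simp only [hnorm]
      refine tendsto_exp_atBot.comp (tendsto_id.const_mul_atTop_of_neg ?_)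
      have : (0 : ℝ) < n ^ 2 := by positivity
      nlinarith [pi_pos]
  have hdom : ∀ᶠ t : ℝ in atTop, ∀ n : ℤ,
      ‖jacobiTheta₂_term n z (σ + t * I)‖ ≤ rexp (-π * n ^ 2) := by
    filter_upwards [eventually_ge_atTop 1] with t ht n
    rw [hnorm, exp_le_exp]
    nlinarith [mul_nonneg pi_pos.le (sq_nonneg (n : ℝ))]
  simpa [jacobiTheta₂] using tendsto_tsum_of_dominated_convergence hbound hlim hdom

lemma im_one_div_two_mul_add_I_div (m : ℕ) (t : ℝ) :
    (1 / (2 * m) + I / ((2 * m) ^ 2 * t) : ℂ).im = 1 / ((2 * m) ^ 2 * t) := by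
  rw [show (2 * m : ℂ) = ((2 * m : ℝ) : ℂ) by push_cast; rfl, ← ofReal_pow, ← ofReal_mul]
  simp only [add_im, div_ofReal_im, one_im, I_im, zero_div, zero_add]

lemma jacobiTheta₂_zero_one_div_two_mul_add (m : ℕ) [NeZero m] {t : ℝ} (ht : 0 < t) :
    jacobiTheta₂ 0 (1 / (2 * m) + I / ((2 * m) ^ 2 * t)) =
      √t * ∑ r ∈ range (2 * m), cexp (π * I * r ^ 2 / (2 * m)) *
        jacobiTheta₂ (r / (2 * m)) (t * I) := by
  have hm : (0 : ℝ) < m := Nat.cast_pos.mpr (NeZero.pos m)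
  have hm₀ : (m : ℂ) ≠ 0 := Nat.cast_ne_zero.mpr (NeZero.ne m)
  have ht₀ : (t : ℂ) ≠ 0 := by exact_mod_cast ht.ne'
  set τ : ℂ := 1 / (2 * m) + I / ((2 * m) ^ 2 * t)
  have hτ : 0 < τ.im := by rw [im_one_div_two_mul_add_I_div]; positivity
  rw [jacobiTheta₂_eq_sum_range (2 * m) 0 hτ, mul_sum]
  refine sum_congr rfl fun r _ => ?_
  set x : ℂ := r / (2 * m)
  have hz : ((2 * m : ℕ) : ℂ) * 0 + (2 * m : ℕ) * r * τ = x * I / t + r * 1 := by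
    simp only [τ, x]; push_cast; field_simp; ring
  have hτ' : ((2 * m : ℕ) : ℂ) ^ 2 * τ = I / t + m * 2 := by
    simp only [τ]; push_cast; field_simp; ring
  have hterm :
      jacobiTheta₂_term r 0 τ = cexp (π * I * r ^ 2 / (2 * m)) * cexp (-(π * x ^ 2 / t)) := by
    rw [jacobiTheta₂_term, ← Complex.exp_add]
    congr 1
    simp only [τ, x]; field_simp; ring_nf; simp [I_sq]; ring
  have hshift : jacobiTheta₂ (x * I / t + r * 1) (I / t + m * 2) =
      jacobiTheta₂ (x * I / t) (I / t) := by
    have h₁ : Function.Periodic (jacobiTheta₂ · (I / t + m * 2)) 1 :=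
      fun z => jacobiTheta₂_add_left z _
    have h₂ : Function.Periodic (jacobiTheta₂ (x * I / t)) 2 := jacobiTheta₂_add_right _
    exact (h₁.nat_mul r (x * I / t)).trans (h₂.nat_mul m (I / t))
  rw [hz, hτ', hshift, jacobiTheta₂_functional_equation_I_div x ht, hterm, Complex.exp_neg]
  field_simp

lemma jacobiTheta₂_zero_neg_one_div_two_mul_add (m : ℕ) [NeZero m] {t : ℝ} (ht : 0 < t) :
    jacobiTheta₂ 0 (-1 / (2 * m) + t * I) =
      cexp (-(π * I / 4)) / √(2 * m) * ∑ r ∈ range (2 * m), cexp (π * I * r ^ 2 / (2 * m)) *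
        jacobiTheta₂ (r / (2 * m)) (t * I) := by
  have hm : (0 : ℝ) < m := Nat.cast_pos.mpr (NeZero.pos m)
  have hm₀ : (m : ℂ) ≠ 0 := Nat.cast_ne_zero.mpr (NeZero.ne m)
  have ht₀ : (t : ℂ) ≠ 0 := by exact_mod_cast ht.ne'
  set τ : ℂ := 1 / (2 * m) + I / ((2 * m) ^ 2 * t)
  have hτ : 0 < τ.im := by rw [im_one_div_two_mul_add_I_div]; positivity
  have hquot : τ / (1 - 2 * (m : ℤ) * τ) = -1 / (2 * m) + t * I := by
    simp only [τ]; push_cast; field_simp; ring_nf; simp [I_sq]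
  have hden : 1 - 2 * (m : ℤ) * τ = -I * ((2 * m * t)⁻¹ : ℝ) := by
    simp only [τ]; push_cast; field_simp; ring
  rw [← hquot, jacobiTheta₂_zero_div_one_sub m hτ, hden,
    neg_I_mul_ofReal_cpow_one_half (by positivity), jacobiTheta₂_zero_one_div_two_mul_add m ht,
    ← mul_assoc]
  congr 1
  have hs : (√(2 * m) : ℂ) ≠ 0 := by
    exact_mod_cast (Real.sqrt_pos.mpr (mul_pos two_pos hm)).ne'
  have hst : (√t : ℂ) ≠ 0 := by exact_mod_cast (Real.sqrt_pos.mpr ht).ne'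
  rw [Real.sqrt_inv, Real.sqrt_mul (by positivity)]
  push_cast
  field_simp

theorem sum_range_cexp_pi_mul_I_sq_div (m : ℕ) [NeZero m] :
    ∑ r ∈ range (2 * m), cexp (π * I * r ^ 2 / (2 * m)) = √(2 * m) * cexp (π * I / 4) := by
  set G := ∑ r ∈ range (2 * m), cexp (π * I * r ^ 2 / (2 * m))
  have hm : (0 : ℝ) < m := Nat.cast_pos.mpr (NeZero.pos m)
  have hsum : Tendsto (fun t : ℝ => ∑ r ∈ range (2 * m), cexp (π * I * r ^ 2 / (2 * m)) *
      jacobiTheta₂ (r / (2 * m)) (t * I)) atTop (𝓝 G) := by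
    refine tendsto_finsetSum _ fun r _ => ?_
    simpa using (tendsto_jacobiTheta₂_add_mul_I_atTop (r / (2 * m)) 0).const_mul
      (cexp (π * I * r ^ 2 / (2 * m)))
  have hlim : Tendsto (fun t : ℝ => jacobiTheta₂ 0 (-1 / (2 * m) + t * I)) atTop
      (𝓝 (cexp (-(π * I / 4)) / √(2 * m) * G)) :=
    (hsum.const_mul _).congr' <| (eventually_gt_atTop 0).mono fun t ht =>
      (jacobiTheta₂_zero_neg_one_div_two_mul_add m ht).symm
  have hG : cexp (-(π * I / 4)) / √(2 * m) * G = 1 :=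
    tendsto_nhds_unique hlim (by simpa using tendsto_jacobiTheta₂_add_mul_I_atTop 0 (-1 / (2 * m)))
  have hs : (√(2 * m) : ℂ) ≠ 0 := by
    exact_mod_cast (Real.sqrt_pos.mpr (mul_pos two_pos hm)).ne'
  rw [Complex.exp_neg] at hG
  field_simp at hG
  linear_combination hG

theorem sum_range_cos_pi_mul_sq_div (m : ℕ) [NeZero m] :
    ∑ r ∈ range (2 * m), Real.cos (π * r ^ 2 / (2 * m)) = √m := by
  have hre (x : ℝ) : (cexp (x * I)).re = Real.cos x := exp_ofReal_mul_I_re x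
  have h := congrArg Complex.re (sum_range_cexp_pi_mul_I_sq_div m)
  rw [re_sum] at h
  convert h using 1
  · refine sum_congr rfl fun r _ => ?_
    rw [← hre]; congr 2; push_cast; ring
  · rw [show (π * I / 4 : ℂ) = ((π / 4 : ℝ) : ℂ) * I by push_cast; ring, re_ofReal_mul,
      hre, cos_pi_div_four, Real.sqrt_mul zero_le_two]
    have h2 : √2 * √2 = (2 : ℝ) := Real.mul_self_sqrt zero_le_two
    linear_combination (-√m / 2) * h2

lemma cos_pi_mul_sq_div_two_mul_sub (m i : ℕ) (hi : i ≤ 2 * m) :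
    Real.cos (π * ((2 * m - i : ℕ) : ℝ) ^ 2 / (2 * m)) = Real.cos (π * i ^ 2 / (2 * m)) := by
  rcases Nat.eq_zero_or_pos m with rfl | hm
  · simp_all
  have hm' : (m : ℝ) ≠ 0 := by positivity
  rw [← Real.cos_add_int_mul_two_pi (π * i ^ 2 / (2 * m)) ((m : ℤ) - i), Nat.cast_sub hi]
  congr 1
  push_cast
  field_simp
  ring

lemma cos_pi_mul_sq_div_two_mul_self_of_odd {m : ℕ} (hm : Odd m) :
    Real.cos (π * m ^ 2 / (2 * m)) = 0 := by
  obtain ⟨j, rfl⟩ := hm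
  rw [Real.cos_eq_zero_iff]
  refine ⟨j, ?_⟩
  have : (2 * j + 1 : ℝ) ≠ 0 := by positivity
  push_cast
  field_simp

lemma sum_range_cos_pi_mul_sq_div_of_odd {m : ℕ} (hm : Odd m) :
    ∑ i ∈ range m, Real.cos (π * i ^ 2 / (2 * m)) = (1 + √m) / 2 := by
  have : NeZero m := ⟨hm.pos.ne'⟩
  set f : ℕ → ℝ := fun i => Real.cos (π * i ^ 2 / (2 * m))
  have hupper : ∑ i ∈ range m, f (m + i) = ∑ i ∈ range m, f i + f m - f 0 := by
    rw [← sum_range_reflect, ← sum_range_succ, sum_range_succ']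
    simp only [add_sub_cancel_right]
    refine sum_congr rfl fun i hi => ?_
    have hi := mem_range.mp hi
    rw [show m + (m - 1 - i) = 2 * m - (i + 1) by omega]
    exact cos_pi_mul_sq_div_two_mul_sub m (i + 1) (by omega)
  have htotal := sum_range_cos_pi_mul_sq_div m
  rw [two_mul, sum_range_add] at htotal
  have hf0 : f 0 = 1 := by simp [f]
  have hfm : f m = 0 := cos_pi_mul_sq_div_two_mul_self_of_odd hm
  change ∑ i ∈ range m, f i + ∑ i ∈ range m, f (m + i) = √m at htotal
  rw [hupper, hf0, hfm] at htotal
  linarith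

lemma neg_one_pow_mul_sin_pi_mul_sq_div {m k : ℕ} (hmk : m + 1 = 2 * k) (n : ℕ) :
    (-1) ^ n * Real.sin (π * n ^ 2 / (2 * m)) =
      (-1) ^ k * Real.cos (π * ((m : ℝ) - n) ^ 2 / (2 * m)) := by
  have hm : (m : ℝ) = 2 * k - 1 := by
    rw [eq_sub_iff_add_eq]; exact_mod_cast hmk
  have hm₀ : (m : ℝ) ≠ 0 := by norm_cast; omega
  have hangle : π * ((m : ℝ) - n) ^ 2 / (2 * m) =
      π * n ^ 2 / (2 * m) + ((k : ℤ) - n : ℤ) * π - π / 2 := by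
    field_simp
    rw [hm]
    push_cast
    ring
  rw [hangle, Real.cos_sub_pi_div_two, Real.sin_add_int_mul_pi, zpow_sub₀ (by norm_num),
    zpow_natCast, zpow_natCast]
  rcases neg_one_pow_eq_or ℝ n with h | h <;> rcases neg_one_pow_eq_or ℝ k with h' | h' <;>
    simp [h, h']

theorem alternating_quadratic_sine_sum_odd (k : ℕ) (hk : 0 < k) :
    ∑ n ∈ Finset.Icc 1 (2 * k - 1), (-1 : ℝ) ^ n *
        Real.sin (π * (n : ℝ) ^ 2 / (2 * (2 * (k : ℝ) - 1))) =
      (-1 : ℝ) ^ k * (1 + Real.sqrt (2 * (k : ℝ) - 1)) / 2 := by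
  set m := 2 * k - 1
  have hmk : m + 1 = 2 * k := by omega
  have hcast : (m : ℝ) = 2 * k - 1 := by
    rw [eq_sub_iff_add_eq]; exact_mod_cast hmk
  have hreflect : ∑ n ∈ Icc 1 m, Real.cos (π * ((m : ℝ) - n) ^ 2 / (2 * m)) =
      ∑ i ∈ range m, Real.cos (π * i ^ 2 / (2 * m)) := by
    refine sum_nbij' (m - ·) (m - ·) ?_ ?_ ?_ ?_ ?_ <;> intro n hn <;> simp_all <;> omega
  rw [← hcast, sum_congr rfl fun n _ => neg_one_pow_mul_sin_pi_mul_sq_div hmk n, ← mul_sum,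
    hreflect, sum_range_cos_pi_mul_sq_div_of_odd ⟨k - 1, by omega⟩, mul_div_assoc]
end

section
/- For every positive integer k, the odd-indexed quadratic Gauss sine sum satisfies ∑_{n=1}^{2k-1} sin(π (2n-1)² / (4(2k-1))) = √(k - 1/2). -/
open Finset Real

/-!
Let `m` be odd and evaluate `θ₂(τ) = ∑ₙ exp(πi (n + 1/2)² τ)` at `τ = 1/m + i x/m²` in two ways.
Splitting `n` by its residue `r` mod `m`, each class is a Gaussian sum with the phase
`exp(πi (r + 1/2)²/m)` (this uses that `m` is odd), and Poisson summation turns it into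
`x^(-1/2)` times a theta value tending to `1` as `x → 0`. On the other hand the modular moves
`τ ↦ -1/τ`, `τ ↦ τ + m`, `τ ↦ -1/τ` (for odd `m` the shift swaps the half-integer and the integer
theta series) give `(x/m)^(-1/2) e^{πi/4}` times a theta value also tending to `1`. Comparing the
two, `∑_{r<m} exp(πi (r + 1/2)²/m) = √m e^{πi/4}`; the theorem is its imaginary part for
`m = 2k - 1`.
-/

open Complex Filter Topology HurwitzZeta

namespace Complex

lemma mul_cpow_of_re_pos {x y : ℂ} (hx : 0 < x.re) (hy : 0 < y.re) (s : ℂ) :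
    (x * y) ^ s = x ^ s * y ^ s := by
  have hx0 : x ≠ 0 := by rintro rfl; simp at hx
  have hy0 : y ≠ 0 := by rintro rfl; simp at hy
  have hargx := abs_lt.1 (abs_arg_lt_pi_div_two_iff.2 (Or.inl hx))
  have hargy := abs_lt.1 (abs_arg_lt_pi_div_two_iff.2 (Or.inl hy))
  have harg : arg x + arg y ∈ Set.Ioc (-π) π := ⟨by linarith, by linarith⟩
  rw [cpow_def_of_ne_zero (mul_ne_zero hx0 hy0), cpow_def_of_ne_zero hx0,
    cpow_def_of_ne_zero hy0, log_mul hx0 hy0 harg, add_mul, exp_add]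

lemma neg_I_mul_ofReal_cpow_half {s : ℝ} (hs : 0 < s) :
    (-I * s) ^ (1 / 2 : ℂ) = √s * cexp (-(π * I / 4)) := by
  rw [cpow_def_of_ne_zero (by simp [hs.ne']), mul_comm, log_mul_ofReal s hs _
    (neg_ne_zero.2 I_ne_zero), log_neg_I, Real.sqrt_eq_rpow, Real.rpow_def_of_pos hs,
    ofReal_exp, ← exp_add]
  congr 1
  push_cast
  ring

end Complex

lemma jacobiTheta₂_term_add_one_right (n : ℤ) (z τ : ℂ) :
    jacobiTheta₂_term n z (τ + 1) = jacobiTheta₂_term n (z + 1 / 2) τ := by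
  obtain ⟨c, hc⟩ := Int.even_mul_pred_self n
  rw [jacobiTheta₂_term, jacobiTheta₂_term, exp_eq_exp_iff_exists_int]
  refine ⟨c, ?_⟩
  have hcC : (n : ℂ) * (n - 1) = c + c := by exact_mod_cast hc
  linear_combination (π * I) * hcC

lemma jacobiTheta₂_add_one_right (z τ : ℂ) :
    jacobiTheta₂ z (τ + 1) = jacobiTheta₂ (z + 1 / 2) τ := by
  simp only [jacobiTheta₂, jacobiTheta₂_term_add_one_right]

lemma jacobiTheta₂_add_odd_right {m : ℕ} (hm : Odd m) (z τ : ℂ) :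
    jacobiTheta₂ z (τ + m) = jacobiTheta₂ (z + 1 / 2) τ := by
  obtain ⟨k, rfl⟩ := hm
  have hper : Function.Periodic (jacobiTheta₂ z) 2 := jacobiTheta₂_add_right z
  rw [← jacobiTheta₂_add_one_right, ← hper.nat_mul k (τ + 1)]
  push_cast
  ring_nf

/-- The classical theta constant `θ₂`, a series over half-integers (not Mathlib's two-variable
`jacobiTheta₂`). -/
noncomputable def thetaTwo (τ : ℂ) : ℂ :=
  ∑' n : ℤ, cexp (π * I * (n + 1 / 2) ^ 2 * τ)

lemma cexp_add_half_sq_eq_mul_jacobiTheta₂_term (n : ℤ) (τ : ℂ) :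
    cexp (π * I * (n + 1 / 2) ^ 2 * τ) =
      cexp (π * I * τ / 4) * jacobiTheta₂_term n (τ / 2) τ := by
  rw [jacobiTheta₂_term, ← Complex.exp_add]
  ring_nf

lemma thetaTwo_eq_cexp_mul_jacobiTheta₂ (τ : ℂ) :
    thetaTwo τ = cexp (π * I * τ / 4) * jacobiTheta₂ (τ / 2) τ := by
  simp only [thetaTwo, jacobiTheta₂, cexp_add_half_sq_eq_mul_jacobiTheta₂_term, tsum_mul_left]

lemma hasSum_thetaTwo {τ : ℂ} (hτ : 0 < τ.im) :
    HasSum (fun n : ℤ ↦ cexp (π * I * (n + 1 / 2) ^ 2 * τ)) (thetaTwo τ) := by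
  simpa only [thetaTwo_eq_cexp_mul_jacobiTheta₂, cexp_add_half_sq_eq_mul_jacobiTheta₂_term]
    using (hasSum_jacobiTheta₂_term (τ / 2) hτ).mul_left (cexp (π * I * τ / 4))

lemma thetaTwo_eq_jacobiTheta₂_half {τ : ℂ} (hτ : τ ≠ 0) :
    thetaTwo τ = 1 / (-I * τ) ^ (1 / 2 : ℂ) * jacobiTheta₂ (1 / 2) (-1 / τ) := by
  have hexp : cexp (π * I * τ / 4) * cexp (-π * I * (τ / 2) ^ 2 / τ) = 1 := by
    rw [← Complex.exp_add, ← Complex.exp_zero]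
    congr 1
    field_simp
    ring
  have hhalf : τ / 2 / τ = 1 / 2 := by field_simp
  rw [thetaTwo_eq_cexp_mul_jacobiTheta₂, jacobiTheta₂_functional_equation, hhalf]
  linear_combination (1 / (-I * τ) ^ (1 / 2 : ℂ) * jacobiTheta₂ (1 / 2) (-1 / τ)) * hexp

lemma thetaTwo_eq_jacobiTheta {m : ℕ} (hm : Odd m) {τ : ℂ} (hτ : 0 < τ.im) :
    thetaTwo τ = 1 / (1 - m * τ) ^ (1 / 2 : ℂ) * jacobiTheta (τ / (1 - m * τ)) := by
  have hτ0 : τ ≠ 0 := by rintro rfl; simp at hτ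
  obtain ⟨σ, hσ⟩ : ∃ σ, σ = -1 / τ + m := ⟨_, rfl⟩
  have hσim : 0 < σ.im := by
    simpa [hσ, div_eq_mul_inv] using div_pos hτ (normSq_pos.2 hτ0)
  have hσ0 : σ ≠ 0 := by rintro rfl; simp at hσim
  have hprod : (-I * τ) * (-I * σ) = 1 - m * τ := by
    rw [hσ]; field_simp; linear_combination (m * τ - 1) * I_sq
  have hinv : -1 / σ = τ / (1 - m * τ) := by
    rw [← hprod]; field_simp; linear_combination -I_sq
  have hre (w : ℂ) (hw : 0 < w.im) : 0 < (-I * w).re := by simpa using hw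
  have hshift := jacobiTheta₂_add_odd_right hm 0 (-1 / τ)
  rw [zero_add, ← hσ, jacobiTheta₂_functional_equation] at hshift
  rw [thetaTwo_eq_jacobiTheta₂_half hτ0, ← hshift, hinv, ← hprod,
    Complex.mul_cpow_of_re_pos (hre τ hτ) (hre σ hσim), jacobiTheta_eq_jacobiTheta₂]
  simp only [zero_div, zero_pow two_ne_zero, mul_zero, Complex.exp_zero, mul_one]
  ring

lemma even_mul_mul_add_two_mul_add_one {m : ℕ} (hm : Odd m) (j r : ℤ) :
    Even (j * (j * m + 2 * r + 1)) := by
  obtain ⟨u, rfl⟩ := hm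
  have h := (Int.even_mul_succ_self j).add (even_two_mul (j * (j * u + r)))
  rwa [show j * (j + 1) + 2 * (j * (j * u + r)) = j * (j * ↑(2 * u + 1) + 2 * r + 1) by
    push_cast; ring] at h

lemma cexp_mul_add_add_half_sq {m : ℕ} (hm : Odd m) (j : ℤ) (r : ℕ) (x : ℝ) :
    cexp (π * I * (((j * m + r : ℤ) : ℂ) + 1 / 2) ^ 2 * (1 / m + I * (x / m ^ 2))) =
      cexp (π * I * (r + 1 / 2) ^ 2 / m) * (rexp (-π * (j + (r + 1 / 2) / m) ^ 2 * x) : ℝ) := by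
  have hm0 : (m : ℂ) ≠ 0 := Nat.cast_ne_zero.2 hm.pos.ne'
  obtain ⟨c, hc⟩ := even_mul_mul_add_two_mul_add_one hm j r
  have hcC : (j : ℂ) * (j * m + 2 * r + 1) = c + c := by exact_mod_cast hc
  rw [ofReal_exp, ← Complex.exp_add, exp_eq_exp_iff_exists_int]
  refine ⟨c, ?_⟩
  push_cast
  field_simp
  linear_combination (4 * I * m ^ 2) * hcC + x * (2 * j * m + 2 * r + 1) ^ 2 * I_sq

lemma im_one_div_add_I_mul_pos {m : ℕ} (hm : 0 < m) {x : ℝ} (hx : 0 < x) :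
    0 < (1 / m + I * (x / m ^ 2) : ℂ).im := by
  rw [add_im, I_mul_im, ← ofReal_natCast, ← ofReal_pow, ← ofReal_div, ofReal_re]
  simpa using div_pos hx (pow_pos (Nat.cast_pos.2 hm) 2)

lemma thetaTwo_eq_sum_evenKernel {m : ℕ} (hm : Odd m) {x : ℝ} (hx : 0 < x) :
    thetaTwo (1 / m + I * (x / m ^ 2)) =
      ∑ r ∈ range m, cexp (π * I * (r + 1 / 2) ^ 2 / m) * evenKernel ((r + 1 / 2) / m : ℝ) x := by
  have : NeZero m := ⟨hm.pos.ne'⟩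
  have hfib : HasSum (fun r : Fin m ↦ cexp (π * I * (r + 1 / 2) ^ 2 / m) *
      evenKernel ((r + 1 / 2) / m : ℝ) x) (thetaTwo (1 / m + I * (x / m ^ 2))) := by
    refine (((Equiv.prodComm _ _).trans (Int.divModEquiv m).symm).hasSum_iff.2
      (hasSum_thetaTwo (im_one_div_add_I_mul_pos hm.pos hx))).prod_fiberwise fun r ↦ ?_
    have := (hasSum_ofReal.2 (hasSum_int_evenKernel ((r + 1 / 2) / m : ℝ) hx)).mul_left
      (cexp (π * I * (r + 1 / 2) ^ 2 / m))
    refine this.congr_fun fun j ↦ ?_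
    simpa using cexp_mul_add_add_half_sq hm j r x
  rw [hfib.unique (hasSum_fintype _), Fin.sum_univ_eq_sum_range
    (fun r ↦ cexp (π * I * (r + 1 / 2) ^ 2 / m) * evenKernel ((r + 1 / 2) / m : ℝ) x)]

lemma sum_cosKernel_eq_jacobiTheta {m : ℕ} (hm : Odd m) {y : ℝ} (hy : 0 < y) :
    ∑ r ∈ range m, cexp (π * I * (r + 1 / 2) ^ 2 / m) * cosKernel ((r + 1 / 2) / m : ℝ) y =
      √m * cexp (π * I / 4) * jacobiTheta (-1 / m + I * y) := by
  have hmR : (0 : ℝ) < m := Nat.cast_pos.2 hm.pos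
  have hmC : (m : ℂ) ≠ 0 := Nat.cast_ne_zero.2 hm.pos.ne'
  have hy0 : (y : ℂ) ≠ 0 := ofReal_ne_zero.2 hy.ne'
  obtain ⟨x, hxy⟩ : ∃ x, x = 1 / y := ⟨_, rfl⟩
  have hx : 0 < x := hxy ▸ one_div_pos.2 hy
  have hlin : 1 - m * (1 / m + I * (x / m ^ 2)) = -I * (x / m : ℝ) := by
    push_cast; field_simp; ring
  have hmob : (1 / m + I * (x / m ^ 2)) / (1 - m * (1 / m + I * (x / m ^ 2))) =
      -1 / m + I * y := by
    rw [hlin, hxy]; push_cast; field_simp; linear_combination -(m * y) * I_sq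
  have hker (a : UnitAddCircle) : (evenKernel a x : ℂ) = (√x : ℂ)⁻¹ * cosKernel a y := by
    rw [evenKernel_functional_equation, ← Real.sqrt_eq_rpow, hxy, one_div_one_div]
    push_cast
    ring
  have hθ := thetaTwo_eq_jacobiTheta hm (im_one_div_add_I_mul_pos hm.pos hx)
  rw [hmob, hlin, Complex.neg_I_mul_ofReal_cpow_half (div_pos hx hmR),
    thetaTwo_eq_sum_evenKernel hm hx] at hθ
  simp only [hker, mul_left_comm _ (√x : ℂ)⁻¹, ← mul_sum] at hθ
  generalize ∑ r ∈ range m, cexp (π * I * (r + 1 / 2) ^ 2 / m) *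
    cosKernel ((r + 1 / 2) / m : ℝ) y = S at hθ ⊢
  generalize jacobiTheta (-1 / m + I * y) = T at hθ ⊢
  have hx0 : (√x : ℂ) ≠ 0 := ofReal_ne_zero.2 (Real.sqrt_pos.2 hx).ne'
  have hm0 : (√m : ℂ) ≠ 0 := ofReal_ne_zero.2 (Real.sqrt_pos.2 hmR).ne'
  rw [Real.sqrt_div hx.le, Complex.exp_neg] at hθ
  push_cast at hθ
  field_simp at hθ
  linear_combination hθ

lemma tendsto_cosKernel_atTop (a : UnitAddCircle) : Tendsto (cosKernel a) atTop (𝓝 1) := by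
  obtain ⟨p, hp, hO⟩ := isBigO_atTop_cosKernel_sub a
  have hexp : Tendsto (fun x : ℝ ↦ rexp (-p * x)) atTop (𝓝 0) :=
    tendsto_exp_atBot.comp (tendsto_id.const_mul_atTop_of_neg (neg_lt_zero.2 hp))
  exact tendsto_sub_nhds_zero_iff.1 (hO.trans_tendsto hexp)

lemma tendsto_jacobiTheta_add_I_mul_atTop (c : ℂ) :
    Tendsto (fun y : ℝ ↦ jacobiTheta (c + I * y)) atTop (𝓝 1) := by
  have hexp : Tendsto (fun τ : ℂ ↦ rexp (-π * τ.im)) (comap im atTop) (𝓝 0) :=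
    tendsto_exp_atBot.comp (tendsto_comap.const_mul_atTop_of_neg (neg_lt_zero.2 pi_pos))
  have him : Tendsto (fun y : ℝ ↦ c + I * y) atTop (comap im atTop) := by
    refine tendsto_comap_iff.2 ?_
    simpa [Function.comp_def] using tendsto_atTop_add_const_left _ c.im tendsto_id
  exact tendsto_sub_nhds_zero_iff.1
    ((isBigO_at_im_infty_jacobiTheta_sub_one.trans_tendsto hexp).comp him)

theorem sum_cexp_add_half_sq_eq {m : ℕ} (hm : Odd m) :
    ∑ r ∈ range m, cexp (π * I * (r + 1 / 2) ^ 2 / m) = √m * cexp (π * I / 4) := by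
  have hsum : Tendsto (fun y ↦ ∑ r ∈ range m, cexp (π * I * (r + 1 / 2) ^ 2 / m) *
      cosKernel ((r + 1 / 2) / m : ℝ) y) atTop
      (𝓝 (∑ r ∈ range m, cexp (π * I * (r + 1 / 2) ^ 2 / m))) := by
    simpa using tendsto_finsetSum (range m) fun (r : ℕ) _ ↦
      ((continuous_ofReal.tendsto 1).comp (tendsto_cosKernel_atTop _)).const_mul
        (cexp (π * I * (r + 1 / 2) ^ 2 / m))
  have htheta := (tendsto_jacobiTheta_add_I_mul_atTop (-1 / m)).const_mul
    (√m * cexp (π * I / 4))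
  rw [mul_one] at htheta
  refine tendsto_nhds_unique (hsum.congr' ?_) htheta
  filter_upwards [eventually_gt_atTop 0] with y hy
  exact sum_cosKernel_eq_jacobiTheta hm hy

theorem sum_sin_add_half_sq_eq {m : ℕ} (hm : Odd m) :
    ∑ r ∈ range m, Real.sin (π * (r + 1 / 2) ^ 2 / m) = √(m / 2) := by
  have him := congrArg im (sum_cexp_add_half_sq_eq hm)
  rw [im_sum, show (π * I / 4 : ℂ) = ((π / 4 : ℝ) : ℂ) * I by push_cast; ring, im_ofReal_mul,
    exp_ofReal_mul_I_im, Real.sin_pi_div_four] at him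
  rw [Real.sqrt_div_self', mul_one_div] at him
  rw [Real.sqrt_div (Nat.cast_nonneg m), ← him]
  refine sum_congr rfl fun r _ ↦ ?_
  rw [show π * I * ((r : ℂ) + 1 / 2) ^ 2 / m = ((π * (r + 1 / 2) ^ 2 / m : ℝ) : ℂ) * I by
    push_cast; ring, exp_ofReal_mul_I_im]

theorem odd_indexed_quadratic_gauss_sine_sum (k : ℕ) (hk : 0 < k) :
    ∑ n ∈ Finset.Icc 1 (2 * k - 1),
        Real.sin (π * (2 * (n : ℝ) - 1) ^ 2 / (4 * (2 * (k : ℝ) - 1))) =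
      Real.sqrt ((k : ℝ) - 1 / 2) := by
  obtain ⟨m, hm⟩ : ∃ m, m = 2 * k - 1 := ⟨_, rfl⟩
  have hmR : (m : ℝ) = 2 * k - 1 := by rw [hm, Nat.cast_sub (by omega)]; push_cast; ring
  rw [← hm, ← hmR, show (k : ℝ) - 1 / 2 = m / 2 by rw [hmR]; ring,
    ← sum_sin_add_half_sq_eq ⟨k - 1, by omega⟩, ← Finset.Ico_add_one_right_eq_Icc,
    Finset.sum_Ico_eq_sum_range, Nat.add_sub_cancel]
  refine sum_congr rfl fun r _ ↦ ?_
  congr 1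
  push_cast
  ring
end

section
/- For every positive integer k, ∑_{n=0}^{k} sin(π n² / k) = √(2k) * (1 + (-1)^k)/4. -/
/-!
For odd `k` the reflection `n ↦ k - n` changes the sign of every term. For even `N` the sum is the
imaginary part of the quadratic Gauss sum `G = ∑_{r < N} e^{π i r² / N}`, and `G = √N e^{π i / 4}`
comes from expanding `θ(1/N + i/(N² Y))` in two ways. Since `e^{π i n² / N}` depends only on
`n mod N`, splitting `n` into residue classes and applying the functional equation to each class
gives `√Y ∑_r e^{π i r² / N} θ₂(r/N, iY)`. The transformation `τ ↦ τ / (1 - Nτ)` of the theta group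
gives `(-i/(NY))^{-1/2} θ(-1/N + iY)`. As `Y → ∞` every theta value tends to `1`.
-/

open Finset Real
open Complex Filter Topology

namespace Complex

lemma mul_cpow_of_arg_add_mem {a b : ℂ} (ha : a ≠ 0) (hb : b ≠ 0)
    (h : arg a + arg b ∈ Set.Ioc (-π) π) (s : ℂ) : (a * b) ^ s = a ^ s * b ^ s := by
  rw [cpow_def_of_ne_zero (mul_ne_zero ha hb), cpow_def_of_ne_zero ha, cpow_def_of_ne_zero hb,
    (log_mul_eq_add_log_iff ha hb).mpr h, add_mul, exp_add]

lemma mul_cpow_of_re_pos_s11 {a b : ℂ} (ha : 0 < a.re) (hb : 0 < b.re) (s : ℂ) :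
    (a * b) ^ s = a ^ s * b ^ s := by
  have hπa := abs_lt.mp (abs_arg_lt_pi_div_two_iff.mpr (Or.inl ha))
  have hπb := abs_lt.mp (abs_arg_lt_pi_div_two_iff.mpr (Or.inl hb))
  refine mul_cpow_of_arg_add_mem (ne_zero_of_re_pos ha) (ne_zero_of_re_pos hb) ⟨?_, ?_⟩ s <;>
    linarith

lemma ofReal_mul_cpow {r : ℝ} (hr : 0 < r) {b : ℂ} (hb : b ≠ 0) (s : ℂ) :
    (r * b) ^ s = (r : ℂ) ^ s * b ^ s :=
  mul_cpow_of_arg_add_mem (ofReal_ne_zero.mpr hr.ne') hb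
    (by rw [arg_ofReal_of_nonneg hr.le, zero_add]; exact ⟨neg_pi_lt_arg b, arg_le_pi b⟩) s

lemma cpow_neg_I_div_natCast {N : ℕ} (hN0 : N ≠ 0) :
    (-I / N) ^ (1 / 2 : ℂ) = cexp (-(π / 4) * I) / √N := by
  have hN : (0 : ℝ) < N := by exact_mod_cast Nat.pos_of_ne_zero hN0
  have hsq : (cexp (-(π / 4) * I) / √N) ^ 2 = -I / N := by
    rw [div_pow, ← exp_nat_mul, ← ofReal_pow, Real.sq_sqrt hN.le,
      show ((2 : ℕ) : ℂ) * (-(π / 4) * I) = -π / 2 * I by push_cast; ring,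
      exp_neg_pi_div_two_mul_I, ofReal_natCast]
  have hre : 0 < (cexp (-(π / 4) * I) / √N).re := by
    rw [div_ofReal_re, show -(π / 4 : ℂ) * I = ((-(π / 4) : ℝ) : ℂ) * I by push_cast; ring,
      exp_ofReal_mul_I_re, Real.cos_neg, Real.cos_pi_div_four]
    positivity
  rw [← hsq, one_div, sq_cpow_two_inv hre]

end Complex

lemma tsum_int_eq_sum_range_tsum {E : Type*} [NormedAddCommGroup E] [CompleteSpace E]
    {f : ℤ → E} (hf : Summable f) {N : ℕ} (hN : N ≠ 0) :
    ∑' n, f n = ∑ r ∈ range N, ∑' q : ℤ, f (q * N + r) := by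
  have : NeZero N := ⟨hN⟩
  let e : Fin N × ℤ ≃ ℤ := (Equiv.prodComm _ _).trans (Int.divModEquiv N).symm
  rw [← e.tsum_eq, Summable.tsum_prod (f := fun p ↦ f (e p)) (e.summable_iff.mpr hf),
    tsum_fintype, ← Fin.sum_univ_eq_sum_range (fun r ↦ ∑' q : ℤ, f (q * N + r))]
  rfl

lemma tendsto_add_I_mul_comap_im_atTop (c : ℂ) :
    Tendsto (fun Y : ℝ ↦ c + I * Y) atTop (comap im atTop) :=
  tendsto_comap_iff.mpr <| by
    simpa [Function.comp_def] using tendsto_atTop_add_const_left atTop c.im tendsto_id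

lemma tendsto_jacobiTheta₂_comap_im_atTop (z : ℂ) :
    Tendsto (jacobiTheta₂ z) (comap im atTop) (𝓝 1) := by
  have hbound := summable_pow_mul_jacobiTheta₂_term_bound |z.im| one_pos 0
  simp only [pow_zero, one_mul] at hbound
  have hlim : ∀ n : ℤ, Tendsto (fun τ ↦ jacobiTheta₂_term n z τ) (comap im atTop)
      (𝓝 (if n = 0 then 1 else 0)) := by
    intro n
    rcases eq_or_ne n 0 with rfl | hn
    · simpa [jacobiTheta₂_term] using tendsto_const_nhds
    · rw [if_neg hn, tendsto_zero_iff_norm_tendsto_zero]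
      simp_rw [norm_jacobiTheta₂_term]
      refine Real.tendsto_exp_atBot.comp (tendsto_atBot_add_const_right _ _ ?_)
      have hn2 : 0 < π * n ^ 2 := by positivity
      exact (tendsto_neg_atTop_atBot.comp (tendsto_comap.const_mul_atTop hn2)).congr
        fun τ ↦ by simp only [Function.comp_apply]; ring
  have hdom : Tendsto (jacobiTheta₂ z) _ _ := tendsto_tsum_of_dominated_convergence hbound hlim
    (by filter_upwards [tendsto_comap.eventually_ge_atTop 1] with τ hτ n
        simpa using norm_jacobiTheta₂_term_le one_pos le_rfl hτ n)
  simpa using hdom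

-- The functional equation of `θ₂` at `(N r τ, N² τ)`.
lemma tsum_cexp_sq_mul_add (N r : ℂ) (hN : N ≠ 0) {τ : ℂ} (hτ : τ ≠ 0) :
    ∑' q : ℤ, cexp (π * I * (q * N + r) ^ 2 * τ) =
      1 / (-I * (N ^ 2 * τ)) ^ (1 / 2 : ℂ) * jacobiTheta₂ (r / N) (-1 / (N ^ 2 * τ)) := by
  have hterm : ∀ q : ℤ, cexp (π * I * (q * N + r) ^ 2 * τ) =
      cexp (π * I * r ^ 2 * τ) * jacobiTheta₂_term q (N * r * τ) (N ^ 2 * τ) := fun q ↦ by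
    rw [jacobiTheta₂_term, ← Complex.exp_add]; ring_nf
  rw [tsum_congr hterm, tsum_mul_left, ← jacobiTheta₂, jacobiTheta₂_functional_equation,
    show N * r * τ / (N ^ 2 * τ) = r / N by field_simp,
    show -π * I * (N * r * τ) ^ 2 / (N ^ 2 * τ) = -(π * I * r ^ 2 * τ) by field_simp,
    Complex.exp_neg]
  field_simp [Complex.exp_ne_zero]

lemma jacobiTheta_eq_one_div_cpow_mul (τ : ℂ) :
    jacobiTheta τ = 1 / (-I * τ) ^ (1 / 2 : ℂ) * jacobiTheta (-1 / τ) := by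
  simpa [jacobiTheta_eq_jacobiTheta₂] using jacobiTheta₂_functional_equation 0 τ

-- `τ ↦ τ / (1 - Nτ)` is `τ ↦ -1/τ`, then translation by `N`, then `τ ↦ -1/τ` again. The two
-- square-root factors combine since `-Iτ` and `-Iσ` both lie in the right half-plane.
lemma cpow_one_sub_mul_mul_jacobiTheta {N : ℤ} (hN : Even N) {τ : ℂ} (hτ : 0 < τ.im) :
    (1 - N * τ) ^ (1 / 2 : ℂ) * jacobiTheta τ = jacobiTheta (τ / (1 - N * τ)) := by
  have hτ0 : τ ≠ 0 := ne_of_apply_ne im (by simpa using hτ.ne')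
  set σ := -1 / τ + N with hσ_def
  have hσ : 0 < σ.im := by
    simpa [σ, neg_div] using UpperHalfPlane.im_inv_neg_coe_pos ⟨τ, hτ⟩
  have hσ0 : σ ≠ 0 := ne_of_apply_ne im (by simpa using hσ.ne')
  have hre : ∀ {w : ℂ}, 0 < w.im → 0 < (-I * w).re := fun hw ↦ by simpa using hw
  obtain ⟨m, rfl⟩ := hN
  have hperiod : jacobiTheta (-1 / τ) = jacobiTheta σ := by
    have h2 : Function.Periodic jacobiTheta 2 := fun w ↦ by rw [add_comm, jacobiTheta_two_add]
    rw [hσ_def, show ((m + m : ℤ) : ℂ) = m * 2 by push_cast; ring]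
    exact (h2.int_mul m _).symm
  have hprod : 1 - ((m + m : ℤ) : ℂ) * τ = (-I * τ) * (-I * σ) := by
    simp only [σ]; push_cast; field_simp; ring_nf; simp [I_sq]; ring
  have hne : 1 - ((m + m : ℤ) : ℂ) * τ ≠ 0 := by
    rw [hprod]; simp [hτ0, hσ0]
  have hinv : τ / (1 - ((m + m : ℤ) : ℂ) * τ) = -1 / σ := by
    rw [div_eq_div_iff hne hσ0]; simp only [σ]; push_cast; field_simp; ring
  rw [hinv, jacobiTheta_eq_one_div_cpow_mul τ, hperiod, jacobiTheta_eq_one_div_cpow_mul σ, hprod,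
    Complex.mul_cpow_of_re_pos_s11 (hre hτ) (hre hσ)]
  have h1 : (-I * τ) ^ (1 / 2 : ℂ) ≠ 0 := by simp [cpow_eq_zero_iff, hτ0]
  have h2 : (-I * σ) ^ (1 / 2 : ℂ) ≠ 0 := by simp [cpow_eq_zero_iff, hσ0]
  field_simp

lemma cexp_pi_mul_I_sq_div_of_even {N : ℕ} (hN : Even N) (q r : ℤ) :
    cexp (π * I * ((q * N + r : ℤ) : ℂ) ^ 2 / N) = cexp (π * I * (r : ℂ) ^ 2 / N) := by
  rcases eq_or_ne N 0 with rfl | hN0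
  · simp
  obtain ⟨m, rfl⟩ := hN
  rw [exp_eq_exp_iff_exists_int]
  refine ⟨m * q ^ 2 + q * r, ?_⟩
  have : (m : ℂ) ≠ 0 := by exact_mod_cast (by omega : m ≠ 0)
  push_cast
  field_simp
  ring

lemma jacobiTheta_one_div_add {N : ℕ} (hN : Even N) (hN0 : N ≠ 0) {τ : ℂ} (hτ : 0 < τ.im) :
    jacobiTheta (1 / N + τ) = ∑ r ∈ range N,
      cexp (π * I * r ^ 2 / N) * ∑' q : ℤ, cexp (π * I * (q * N + r) ^ 2 * τ) := by
  have hsum : Summable fun n : ℤ ↦ cexp (π * I * n ^ 2 * (1 / N + τ)) := by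
    simpa [jacobiTheta₂_term] using
      (summable_jacobiTheta₂_term_iff 0 (1 / N + τ)).mpr (by simpa using hτ)
  rw [jacobiTheta, tsum_int_eq_sum_range_tsum hsum hN0]
  refine sum_congr rfl fun r _ ↦ ?_
  rw [← tsum_mul_left]
  refine tsum_congr fun q ↦ ?_
  have hphase := cexp_pi_mul_I_sq_div_of_even hN q r
  push_cast at hphase ⊢
  rw [← hphase, ← Complex.exp_add]
  ring_nf

-- Both sides are `θ(1/N + τ)` with `τ = I / (N² Y)`, expanded by `jacobiTheta_one_div_add` and
-- by `cpow_one_sub_mul_mul_jacobiTheta`.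
lemma jacobiTheta_neg_one_div_add_I_mul {N : ℕ} (hN : Even N) (hN0 : N ≠ 0) {Y : ℝ} (hY : 0 < Y) :
    jacobiTheta (-1 / N + I * Y) = (-I / N) ^ (1 / 2 : ℂ) *
      ∑ r ∈ range N, cexp (π * I * r ^ 2 / N) * jacobiTheta₂ (r / N) (I * Y) := by
  have hNC : (N : ℂ) ≠ 0 := Nat.cast_ne_zero.mpr hN0
  have hYC : (Y : ℂ) ≠ 0 := ofReal_ne_zero.mpr hY.ne'
  set τ : ℂ := I / (N ^ 2 * Y)
  have hτ0 : τ ≠ 0 := by simp [τ, hNC, hYC]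
  have hτ : 0 < τ.im := by
    have : τ = ((1 / (N ^ 2 * Y) : ℝ) : ℂ) * I := by simp [τ]; ring
    rw [this, im_ofReal_mul, I_im, mul_one]
    have : (0 : ℝ) < N := by exact_mod_cast Nat.pos_of_ne_zero hN0
    positivity
  have hB := cpow_one_sub_mul_mul_jacobiTheta (hN.natCast (α := ℤ)) (τ := 1 / N + τ)
    (by simpa using hτ)
  rw [show (1 / N + τ) / (1 - ((N : ℤ) : ℂ) * (1 / N + τ)) = -1 / N + I * Y by
      simp only [τ]; push_cast; field_simp; ring_nf; simp [I_sq],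
    show 1 - ((N : ℤ) : ℂ) * (1 / N + τ) = ((1 / Y : ℝ) : ℂ) * (-I / N) by
      simp only [τ]; push_cast; field_simp; ring,
    Complex.ofReal_mul_cpow (by positivity) (by simp [hNC]), jacobiTheta_one_div_add hN hN0 hτ]
    at hB
  simp_rw [tsum_cexp_sq_mul_add _ _ hNC hτ0,
    show -I * ((N : ℂ) ^ 2 * τ) = ((1 / Y : ℝ) : ℂ) by
      simp only [τ]; push_cast; field_simp; simp [I_sq],
    show -1 / ((N : ℂ) ^ 2 * τ) = I * Y by simp only [τ]; field_simp; simp [I_sq]] at hB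
  rw [← hB, mul_assoc, Finset.mul_sum, Finset.mul_sum, Finset.mul_sum]
  have h1 : ((1 / Y : ℝ) : ℂ) ^ (1 / 2 : ℂ) ≠ 0 := by simp [cpow_eq_zero_iff, hYC]
  refine sum_congr rfl fun r _ ↦ ?_
  field_simp

theorem sum_range_cexp_sq_div_of_even {N : ℕ} (hN : Even N) (hN0 : N ≠ 0) :
    ∑ r ∈ range N, cexp (π * I * r ^ 2 / N) = √N * cexp (π / 4 * I) := by
  have hlim : Tendsto (fun Y : ℝ ↦ jacobiTheta (-1 / N + I * Y)) atTop
      (𝓝 ((-I / N) ^ (1 / 2 : ℂ) * ∑ r ∈ range N, cexp (π * I * r ^ 2 / N) * 1)) := by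
    refine Tendsto.congr' ?_ (tendsto_const_nhds.mul (tendsto_finsetSum _ fun r _ ↦
      tendsto_const_nhds.mul
        ((tendsto_jacobiTheta₂_comap_im_atTop (r / N)).comp
          (tendsto_add_I_mul_comap_im_atTop 0))))
    filter_upwards [eventually_gt_atTop 0] with Y hY
    simpa using (jacobiTheta_neg_one_div_add_I_mul hN hN0 hY).symm
  have hone : Tendsto (fun Y : ℝ ↦ jacobiTheta (-1 / N + I * Y)) atTop (𝓝 1) := by
    simpa only [jacobiTheta_eq_jacobiTheta₂, Function.comp_def] using
      (tendsto_jacobiTheta₂_comap_im_atTop 0).comp (tendsto_add_I_mul_comap_im_atTop _)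
  have key := tendsto_nhds_unique hlim hone
  have hN : (√N : ℂ) ≠ 0 := by simp [hN0]
  simp_rw [mul_one, Complex.cpow_neg_I_div_natCast hN0] at key
  rw [div_mul_eq_mul_div, div_eq_one_iff_eq hN] at key
  have hc : cexp (-(π / 4) * I) * cexp (π / 4 * I) = 1 := by rw [← Complex.exp_add]; simp
  linear_combination cexp (π / 4 * I) * key - (∑ r ∈ range N, cexp (π * I * r ^ 2 / N)) * hc

lemma sum_range_sin_sq_div_of_even {N : ℕ} (hN : Even N) (hN0 : N ≠ 0) :
    ∑ n ∈ range N, Real.sin (π * n ^ 2 / N) = √(2 * N) / 2 := by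
  have hterm : ∀ n : ℕ, Real.sin (π * n ^ 2 / N) = (cexp (π * I * n ^ 2 / N)).im := fun n ↦ by
    rw [show (π * I * n ^ 2 / N : ℂ) = ((π * n ^ 2 / N : ℝ) : ℂ) * I by push_cast; ring,
      exp_ofReal_mul_I_im]
  simp_rw [hterm, ← Complex.im_sum, sum_range_cexp_sq_div_of_even hN hN0, im_ofReal_mul,
    show (π / 4 : ℂ) * I = ((π / 4 : ℝ) : ℂ) * I by push_cast; ring, exp_ofReal_mul_I_im,
    Real.sin_pi_div_four, Real.sqrt_mul zero_le_two]
  ring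

lemma sin_pi_mul_sq_div_self_sub_of_odd {k n : ℕ} (hk : Odd k) (hn : n ≤ k) :
    Real.sin (π * (k - n : ℕ) ^ 2 / k) = -Real.sin (π * n ^ 2 / k) := by
  have hk0 : (k : ℝ) ≠ 0 := by exact_mod_cast hk.pos.ne'
  rw [show π * ((k - n : ℕ) : ℝ) ^ 2 / k = π * n ^ 2 / k + ((k - 2 * n : ℤ) : ℝ) * π by
      push_cast [hn]; field_simp; ring,
    Real.sin_add_int_mul_pi, Odd.neg_one_zpow (by
      rcases hk with ⟨j, rfl⟩; exact ⟨j - n, by push_cast; ring⟩)]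
  ring

lemma sum_Icc_sin_sq_div_of_odd {k : ℕ} (hk : Odd k) :
    ∑ n ∈ Icc 0 k, Real.sin (π * n ^ 2 / k) = 0 := by
  rw [← Nat.range_succ_eq_Icc_zero]
  have hreflect := sum_range_reflect (fun n ↦ Real.sin (π * n ^ 2 / k)) (k + 1)
  have hneg : ∑ n ∈ range (k + 1), Real.sin (π * (k + 1 - 1 - n : ℕ) ^ 2 / k) =
      -∑ n ∈ range (k + 1), Real.sin (π * n ^ 2 / k) := by
    rw [← sum_neg_distrib]
    refine sum_congr rfl fun n hn ↦ ?_
    rw [Nat.add_sub_cancel]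
    exact sin_pi_mul_sq_div_self_sub_of_odd hk (Nat.lt_succ_iff.mp (mem_range.mp hn))
  linarith

theorem quadratic_sine_sum (k : ℕ) (hk : 0 < k) :
    ∑ n ∈ Finset.Icc 0 k, Real.sin (π * (n : ℝ) ^ 2 / k) =
      Real.sqrt (2 * (k : ℝ)) * (1 + (-1 : ℝ) ^ k) / 4 := by
  rcases Nat.even_or_odd k with hk2 | hk2
  · have hlast : Real.sin (π * (k : ℝ) ^ 2 / k) = 0 := by
      rw [show π * (k : ℝ) ^ 2 / k = k * π by field_simp, Real.sin_nat_mul_pi]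
    rw [← Nat.range_succ_eq_Icc_zero, sum_range_succ, sum_range_sin_sq_div_of_even hk2 hk.ne',
      hlast, hk2.neg_one_pow]
    ring
  · rw [sum_Icc_sin_sq_div_of_odd hk2, hk2.neg_one_pow]
    ring
end

section
/- For all positive integers k and p, the extended classical Gauss sine sum satisfies ∑_{n=1}^{pk} sin(2π n² / k) = (p/2) * √k * (1 + cos(kπ/2) - sin(kπ/2)). -/
/-!
Write `G = ∑_{r < k} e^{2πi r²/k}` and compare two asymptotics of
`θ(ε) = ∑_{n ∈ ℤ} e^{-π (ε - 2i/k) n²} = ∑_{n ∈ ℤ} e^{2πi n²/k} e^{-π ε n²}` as `ε → 0⁺`.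
Splitting `n` into residue classes mod `k` and applying Poisson summation to each class, only
the zero frequency survives in the limit, so `√ε θ(ε) → G / k`. Applying Poisson summation to
`θ` itself instead gives `θ(ε) = a^{-1/2} ∑ e^{-π n² / a}` with `a = ε - 2i/k`, and
`1/a = ik/2 + b` with `b → 0`; since `e^{-πik n²/2}` has period `2`, the same asymptotics now
gives `√ε θ(ε) → (1 + i)(1 + (-i)^k) / (2√k)`. Hence `G = √k (1 + i)(1 + (-i)^k) / 2`, and the
sine sum over `p` periods is `p · Im G`.
-/

open Finset Real Complex Filter Topology

theorem Complex.inv_re_pos_iff {z : ℂ} : 0 < z⁻¹.re ↔ 0 < z.re := by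
  rw [inv_re]
  refine ⟨fun h ↦ ?_, fun h ↦ div_pos h (normSq_pos.mpr ?_)⟩
  · exact ((div_pos_iff.mp h).resolve_right fun h' ↦ (normSq_nonneg _).not_gt h'.2).1
  · rintro rfl; simp at h

theorem Complex.mul_cpow_of_re_pos_s17 {x y : ℂ} (hx : 0 < x.re) (hy : 0 < y.re) (s : ℂ) :
    (x * y) ^ s = x ^ s * y ^ s := by
  have hx₀ : x ≠ 0 := by rintro rfl; simp at hx
  have hy₀ : y ≠ 0 := by rintro rfl; simp at hy
  have harg (z : ℂ) (hz : 0 < z.re) : |arg z| < π / 2 := abs_arg_lt_pi_div_two_iff.mpr (Or.inl hz)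
  have hlog : log (x * y) = log x + log y := by
    refine log_mul hx₀ hy₀ ⟨?_, ?_⟩ <;>
      linarith [abs_lt.mp (harg x hx), abs_lt.mp (harg y hy)]
  rw [cpow_def_of_ne_zero (mul_ne_zero hx₀ hy₀), cpow_def_of_ne_zero hx₀,
    cpow_def_of_ne_zero hy₀, hlog, add_mul, Complex.exp_add]

theorem Complex.norm_cexp_neg_pi_mul_sq (w : ℂ) (n : ℤ) :
    ‖cexp (-π * w * n ^ 2)‖ = Real.exp (-π * w.re * n ^ 2) := by
  rw [Complex.norm_exp, show (-π * w * n ^ 2 : ℂ) = ((-π * n ^ 2 : ℝ) : ℂ) * w by push_cast; ring,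
    re_ofReal_mul]
  ring_nf

theorem Real.summable_exp_neg_pi_mul_sq {a : ℝ} (ha : 0 < a) :
    Summable fun n : ℤ ↦ Real.exp (-π * a * n ^ 2) := by
  simpa [mul_assoc] using summable_pow_mul_jacobiTheta₂_term_bound 0 ha 0

theorem summable_mul_cexp_neg_pi_mul_sq {c : ℤ → ℂ} {C : ℝ} (hc : ∀ n, ‖c n‖ ≤ C) {β : ℂ}
    (hβ : 0 < β.re) : Summable fun n : ℤ ↦ c n * cexp (-π * β * n ^ 2) := by
  refine ((Real.summable_exp_neg_pi_mul_sq hβ).mul_left C).of_norm_bounded fun n ↦ ?_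
  rw [norm_mul, Complex.norm_cexp_neg_pi_mul_sq]
  gcongr
  exact hc n

theorem Function.Periodic.exists_forall_norm_le {E : Type*} [Norm E] {c : ℤ → E} {d : ℤ}
    (hc : Function.Periodic c d) (hd : 0 < d) : ∃ C, ∀ n, ‖c n‖ ≤ C := by
  obtain ⟨C, hC⟩ := ((Set.finite_Ioc 0 (0 + d)).image fun n ↦ ‖c n‖).bddAbove
  refine ⟨C, fun n ↦ ?_⟩
  obtain ⟨y, hy, hny⟩ := hc.exists_mem_Ioc hd n 0
  rw [hny]
  exact hC ⟨y, hy, rfl⟩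

theorem tsum_int_eq_sum_range_tsum_mul_add {M : Type*} [AddCommGroup M] [UniformSpace M]
    [IsUniformAddGroup M] [CompleteSpace M] [T2Space M] {f : ℤ → M} (hf : Summable f) (d : ℕ)
    [NeZero d] : ∑' n, f n = ∑ r ∈ range d, ∑' m : ℤ, f (m * d + r) := by
  have hfib (r : ℕ) : Summable fun m : ℤ ↦ f (m * d + r) :=
    hf.comp_injective fun a b hab ↦ by simpa [NeZero.ne] using hab
  have hprod := ((Int.divModEquiv d).trans (Equiv.prodComm _ _)).symm.hasSum_iff.mpr hf.hasSum
  have := hprod.prod_fiberwise fun r ↦ (hfib r).hasSum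
  rw [← Fin.sum_univ_eq_sum_range (fun r ↦ ∑' m : ℤ, f (m * d + r)), ← this.tsum_eq, tsum_fintype]

theorem Complex.tsum_cexp_neg_pi_mul_add_sq {β : ℂ} (hβ : 0 < β.re) (x : ℝ) :
    ∑' m : ℤ, cexp (-π * β * (m + x) ^ 2) =
      1 / β ^ (1 / 2 : ℂ) * ∑' n : ℤ, cexp (2 * π * I * n * x) * cexp (-π * β⁻¹ * n ^ 2) := by
  have hβ₀ : β ≠ 0 := by rintro rfl; simp at hβ
  have key := Complex.tsum_exp_neg_quadratic hβ (-(β * x))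
  have hL (m : ℤ) : cexp (-π * β * m ^ 2 + 2 * π * -(β * x) * m) =
      cexp (-π * β * (m + x) ^ 2) * cexp (π * β * x ^ 2) := by
    rw [← Complex.exp_add]; ring_nf
  have hR (n : ℤ) : cexp (-π / β * (n + I * -(β * x)) ^ 2) =
      cexp (2 * π * I * n * x) * cexp (-π * β⁻¹ * n ^ 2) * cexp (π * β * x ^ 2) := by
    rw [← Complex.exp_add, ← Complex.exp_add]
    congr 1
    field_simp
    ring_nf
    rw [I_sq]
    ring
  simp_rw [hL, hR, tsum_mul_right] at key
  exact mul_right_cancel₀ (Complex.exp_ne_zero _) (key.trans (mul_assoc _ _ _).symm)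

theorem tendsto_tsum_mul_cexp_neg_pi_mul_sq {ι : Type*} {l : Filter ι} {w : ι → ℂ}
    (hw : Tendsto (fun i ↦ (w i).re) l atTop) {g : ℤ → ℂ} {C : ℝ} (hg : ∀ n, ‖g n‖ ≤ C) :
    Tendsto (fun i ↦ ∑' n : ℤ, g n * cexp (-π * w i * n ^ 2)) l (𝓝 (g 0)) := by
  have hlim (n : ℤ) : Tendsto (fun i ↦ g n * cexp (-π * w i * n ^ 2)) l
      (𝓝 (if n = 0 then g 0 else 0)) := by
    split_ifs with hn
    · subst hn; simpa using tendsto_const_nhds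
    · have hn2 : 0 < π * (n : ℝ) ^ 2 := by positivity
      have hexp : Tendsto (fun i ↦ Real.exp (-(π * n ^ 2 * (w i).re))) l (𝓝 0) :=
        Real.tendsto_exp_atBot.comp (tendsto_neg_atTop_atBot.comp (hw.const_mul_atTop hn2))
      rw [tendsto_zero_iff_norm_tendsto_zero]
      refine (mul_zero ‖g n‖ ▸ hexp.const_mul ‖g n‖).congr fun i ↦ ?_
      rw [norm_mul, Complex.norm_cexp_neg_pi_mul_sq]
      ring_nf
  have hbound : ∀ᶠ i in l, ∀ n : ℤ,
      ‖g n * cexp (-π * w i * n ^ 2)‖ ≤ C * Real.exp (-π * 1 * n ^ 2) := by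
    filter_upwards [hw.eventually_ge_atTop 1] with i hi n
    rw [norm_mul, Complex.norm_cexp_neg_pi_mul_sq]
    refine mul_le_mul (hg n) (Real.exp_le_exp.mpr ?_) (Real.exp_nonneg _)
      ((norm_nonneg _).trans (hg 0))
    nlinarith [pi_pos, sq_nonneg (n : ℝ), mul_nonneg pi_pos.le (sq_nonneg (n : ℝ))]
  simpa using tendsto_tsum_of_dominated_convergence
    ((Real.summable_exp_neg_pi_mul_sq one_pos).mul_left C) hlim hbound

theorem Function.Periodic.cpow_mul_tsum_mul_cexp_neg_pi_mul_sq_eq {c : ℤ → ℂ} {d : ℕ} [NeZero d]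
    (hc : Function.Periodic c d) {β : ℂ} (hβ : 0 < β.re) :
    β ^ (1 / 2 : ℂ) * ∑' n : ℤ, c n * cexp (-π * β * n ^ 2) =
      ∑ r ∈ range d, c r / d *
        ∑' j : ℤ, cexp (2 * π * I * j * ((r / d : ℝ) : ℂ)) * cexp (-π * (β * d ^ 2)⁻¹ * j ^ 2) := by
  have hd : (0 : ℝ) < d := Nat.cast_pos.mpr (Nat.pos_of_neZero d)
  have hd₀ : (d : ℂ) ≠ 0 := NeZero.ne _
  have hdre : 0 < (d : ℂ).re := by rwa [natCast_re]
  have hd2re : 0 < ((d : ℂ) ^ 2).re := by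
    rw [← ofReal_natCast, ← ofReal_pow, ofReal_re]
    positivity
  have hβ₀ : β ^ (1 / 2 : ℂ) ≠ 0 := by
    rw [Ne, cpow_eq_zero_iff]
    rintro ⟨rfl, -⟩
    simp at hβ
  have hβd : 0 < (β * d ^ 2).re := by
    rw [show β * (d : ℂ) ^ 2 = ((d ^ 2 : ℝ) : ℂ) * β by push_cast; ring, re_ofReal_mul]
    positivity
  obtain ⟨C, hC⟩ := hc.exists_forall_norm_le (by exact_mod_cast hd)
  rw [tsum_int_eq_sum_range_tsum_mul_add (summable_mul_cexp_neg_pi_mul_sq hC hβ) d, mul_sum]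
  refine sum_congr rfl fun r _ ↦ ?_
  have hterm (m : ℤ) : c (m * d + r) * cexp (-π * β * ((m * d + r : ℤ) : ℂ) ^ 2) =
      c r * cexp (-π * (β * d ^ 2) * (m + ((r / d : ℝ) : ℂ)) ^ 2) := by
    have hcr : c (m * d + r) = c r := by simpa [add_comm] using hc.zsmul m r
    rw [hcr]
    congr 2
    push_cast
    field_simp
  rw [tsum_congr hterm, tsum_mul_left, Complex.tsum_cexp_neg_pi_mul_add_sq hβd,
    Complex.mul_cpow_of_re_pos_s17 hβ hd2re, one_div (2 : ℂ), sq_cpow_two_inv hdre]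
  generalize ∑' j : ℤ, cexp (2 * π * I * j * ((r / d : ℝ) : ℂ)) *
    cexp (-π * (β * d ^ 2)⁻¹ * j ^ 2) = S
  field_simp

theorem Function.Periodic.tendsto_cpow_mul_tsum_mul_cexp_neg_pi_mul_sq {c : ℤ → ℂ} {d : ℕ}
    [NeZero d] (hc : Function.Periodic c d) {ι : Type*} {l : Filter ι} {β : ι → ℂ}
    (hβ : Tendsto (fun i ↦ (β i)⁻¹.re) l atTop) :
    Tendsto (fun i ↦ β i ^ (1 / 2 : ℂ) * ∑' n : ℤ, c n * cexp (-π * β i * n ^ 2)) l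
      (𝓝 ((∑ r ∈ range d, c r) / d)) := by
  have hd : (0 : ℝ) < d := Nat.cast_pos.mpr (Nat.pos_of_neZero d)
  have hre : ∀ᶠ i in l, 0 < (β i).re := by
    filter_upwards [hβ.eventually_gt_atTop 0] with i hi
    exact inv_re_pos_iff.mp hi
  have hw : Tendsto (fun i ↦ (β i * d ^ 2)⁻¹.re) l atTop := by
    refine (hβ.const_mul_atTop (inv_pos.mpr (pow_pos hd 2))).congr fun i ↦ ?_
    rw [mul_inv, ← ofReal_natCast, ← ofReal_pow, ← ofReal_inv, re_mul_ofReal, mul_comm]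
  have hinner (r : ℕ) : Tendsto (fun i ↦ ∑' j : ℤ, cexp (2 * π * I * j * ((r / d : ℝ) : ℂ)) *
      cexp (-π * (β i * d ^ 2)⁻¹ * j ^ 2)) l (𝓝 1) := by
    simpa using tendsto_tsum_mul_cexp_neg_pi_mul_sq hw
      (g := fun j : ℤ ↦ cexp (2 * π * I * j * ((r / d : ℝ) : ℂ))) (C := 1) fun j ↦ by
      rw [show 2 * π * I * j * ((r / d : ℝ) : ℂ) = ((2 * π * j * (r / d) : ℝ) : ℂ) * I by
        push_cast; ring, norm_exp_ofReal_mul_I]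
  rw [sum_div]
  refine Tendsto.congr'
    (hre.mono fun i hi ↦ (hc.cpow_mul_tsum_mul_cexp_neg_pi_mul_sq_eq hi).symm) ?_
  simpa using tendsto_finsetSum (range d) fun r _ ↦ (hinner r).const_mul (c r / d)

theorem periodic_cexp_neg_pi_I_mul_sq (k : ℕ) :
    Function.Periodic (fun n : ℤ ↦ cexp (-π * I * k * n ^ 2 / 2)) (2 : ℕ) := fun n ↦ by
  dsimp only
  rw [show -π * I * k * ((n + (2 : ℕ) : ℤ) : ℂ) ^ 2 / 2 =
      -π * I * k * n ^ 2 / 2 + (-(k * (n + 1)) : ℤ) * (2 * π * I) by push_cast; ring,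
    Complex.exp_add, Complex.exp_int_mul_two_pi_mul_I, mul_one]

theorem Complex.neg_I_pow (k : ℕ) :
    (-I) ^ k = Real.cos (k * π / 2) - Real.sin (k * π / 2) * I := by
  have hI : -I = cexp (-(π / 2 * I)) := by rw [Complex.exp_neg, exp_pi_div_two_mul_I, inv_I]
  rw [hI, ← Complex.exp_nat_mul,
    show (k : ℂ) * -(π / 2 * I) = ((-(k * π / 2) : ℝ) : ℂ) * I by push_cast; ring,
    exp_mul_I, ← ofReal_cos, ← ofReal_sin, Real.cos_neg, Real.sin_neg]
  push_cast
  ring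

noncomputable def gaussTheta (k : ℕ) (ε : ℝ) : ℂ :=
  ∑' n : ℤ, cexp (-π * (ε - 2 * I / k) * n ^ 2)

section GaussSum

variable (k : ℕ) [NeZero k]

theorem periodic_cexp_two_pi_I_mul_sq_div :
    Function.Periodic (fun n : ℤ ↦ cexp (2 * π * I * n ^ 2 / k)) k := fun n ↦ by
  have hk : (k : ℂ) ≠ 0 := NeZero.ne _
  dsimp only
  rw [show 2 * π * I * ((n + k : ℤ) : ℂ) ^ 2 / k =
      2 * π * I * n ^ 2 / k + (2 * n + k : ℤ) * (2 * π * I) by push_cast; field_simp; ring,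
    Complex.exp_add, Complex.exp_int_mul_two_pi_mul_I, mul_one]

theorem inv_inv_sub_I_mul_div_two {ε : ℝ} (hε : ε ≠ 0) :
    ((ε - 2 * I / k)⁻¹ - I * k / 2)⁻¹ = ((4 / (k ^ 2 * ε) : ℝ) : ℂ) + 2 * I / k := by
  have hk : (k : ℂ) ≠ 0 := NeZero.ne _
  have hε' : (ε : ℂ) ≠ 0 := ofReal_ne_zero.mpr hε
  have hden : (ε : ℂ) * k - I * 2 ≠ 0 := by
    intro h
    simpa using congrArg im h
  refine inv_eq_of_mul_eq_one_right ?_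
  push_cast
  field_simp
  ring_nf
  linear_combination (4 * I) * mul_inv_cancel₀ hden +
    (8 * ((ε : ℂ) * k - I * 2)⁻¹ - 2 * ε * k) * I_sq

theorem ofReal_cpow_half_eq_mul {ε : ℝ} (hε : 0 < ε) :
    (ε : ℂ) ^ (1 / 2 : ℂ) = (1 + I) / √k *
      ((ε - 2 * I / k) ^ (1 / 2 : ℂ) * ((ε - 2 * I / k)⁻¹ - I * k / 2) ^ (1 / 2 : ℂ)) := by
  have hk : (0 : ℝ) < k := Nat.cast_pos.mpr (Nat.pos_of_neZero k)
  have hk' : (k : ℂ) ≠ 0 := NeZero.ne _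
  have hare : 0 < ((ε : ℂ) - 2 * I / k).re := by simpa using hε
  have ha : (ε : ℂ) - 2 * I / k ≠ 0 := by rintro h; simp [h] at hare
  have hbre : 0 < ((ε - 2 * I / k)⁻¹ - I * k / 2 : ℂ).re := by
    rw [← inv_re_pos_iff, inv_inv_sub_I_mul_div_two k hε.ne']
    have him : (2 * I / k : ℂ).re = 0 := by simp
    rw [add_re, ofReal_re, him, add_zero]
    positivity
  have hab : (ε - 2 * I / k) * ((ε - 2 * I / k)⁻¹ - I * k / 2) =
      (((√(k * ε) / 2 : ℝ) : ℂ) * (1 - I)) ^ 2 := by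
    rw [mul_sub, mul_inv_cancel₀ ha, mul_pow, ← ofReal_pow, div_pow, Real.sq_sqrt (by positivity)]
    push_cast
    field_simp
    ring_nf
    rw [I_sq]
    ring
  have hsqrt : (ε : ℂ) ^ (1 / 2 : ℂ) = √ε := by
    rw [Real.sqrt_eq_rpow, ofReal_cpow hε.le]
    push_cast
    rfl
  have hsqrtk : (√k : ℂ) ≠ 0 := by exact_mod_cast (Real.sqrt_pos.mpr hk).ne'
  rw [← mul_cpow_of_re_pos_s17 hare hbre, hab, one_div (2 : ℂ),
    sq_cpow_two_inv (by simpa using by positivity), ← one_div, hsqrt, Real.sqrt_mul hk.le]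
  push_cast
  field_simp
  ring_nf
  rw [I_sq]
  ring

theorem tendsto_cpow_half_mul_gaussTheta_sum_div :
    Tendsto (fun ε : ℝ ↦ (ε : ℂ) ^ (1 / 2 : ℂ) * gaussTheta k ε) (𝓝[>] 0)
      (𝓝 ((∑ r ∈ range k, cexp (2 * π * I * r ^ 2 / k)) / k)) := by
  have hinv : Tendsto (fun ε : ℝ ↦ ((ε : ℂ))⁻¹.re) (𝓝[>] 0) atTop :=
    tendsto_inv_nhdsGT_zero.congr fun ε ↦ by simp
  have hterm (ε : ℝ) (n : ℤ) : cexp (-π * (ε - 2 * I / k) * n ^ 2) =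
      cexp (2 * π * I * n ^ 2 / k) * cexp (-π * ε * n ^ 2) := by
    rw [← Complex.exp_add]
    ring_nf
  have := (periodic_cexp_two_pi_I_mul_sq_div k).tendsto_cpow_mul_tsum_mul_cexp_neg_pi_mul_sq hinv
  simp only [Int.cast_natCast] at this
  exact this.congr fun ε ↦ by simp_rw [gaussTheta, hterm]

theorem tendsto_cpow_half_mul_gaussTheta :
    Tendsto (fun ε : ℝ ↦ (ε : ℂ) ^ (1 / 2 : ℂ) * gaussTheta k ε) (𝓝[>] 0)
      (𝓝 ((1 + I) / √k * ((1 + (-I) ^ k) / 2))) := by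
  have hk : (0 : ℝ) < k := Nat.cast_pos.mpr (Nat.pos_of_neZero k)
  have hbinv : Tendsto (fun ε : ℝ ↦ ((ε - 2 * I / k)⁻¹ - I * k / 2 : ℂ)⁻¹.re) (𝓝[>] 0) atTop := by
    refine (tendsto_inv_nhdsGT_zero.const_mul_atTop (by positivity : (0 : ℝ) < 4 / k ^ 2)).congr'
      (eventually_mem_nhdsWithin.mono fun ε (hε : 0 < ε) ↦ ?_)
    dsimp only
    rw [inv_inv_sub_I_mul_div_two k hε.ne', add_re, ofReal_re]
    simp
    ring
  have hlim := (periodic_cexp_neg_pi_I_mul_sq k).tendsto_cpow_mul_tsum_mul_cexp_neg_pi_mul_sq hbinv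
  have hval : (∑ r ∈ range 2, cexp (-π * I * k * ((r : ℤ) : ℂ) ^ 2 / 2)) / ((2 : ℕ) : ℂ) =
      (1 + (-I) ^ k) / 2 := by
    have hχ : cexp (-π * I * k * ((1 : ℕ) : ℤ) ^ 2 / 2) = (-I) ^ k := by
      rw [show -π * I * k * ((1 : ℕ) : ℤ) ^ 2 / 2 = k * -(π / 2 * I) by push_cast; ring,
        Complex.exp_nat_mul, Complex.exp_neg, exp_pi_div_two_mul_I, inv_I]
    rw [sum_range_succ, sum_range_one, hχ]
    simp
  rw [hval] at hlim
  refine (hlim.const_mul ((1 + I) / √k)).congr'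
    (eventually_mem_nhdsWithin.mono fun ε (hε : 0 < ε) ↦ ?_)
  have hare : 0 < ((ε : ℂ) - 2 * I / k).re := by simpa using hε
  have ha : ((ε : ℂ) - 2 * I / k) ^ (1 / 2 : ℂ) ≠ 0 := by
    rw [Ne, cpow_eq_zero_iff]
    rintro ⟨h, -⟩
    simp [h] at hare
  have hterm (n : ℤ) : cexp (-π / (ε - 2 * I / k) * n ^ 2) =
      cexp (-π * I * k * n ^ 2 / 2) * cexp (-π * ((ε - 2 * I / k)⁻¹ - I * k / 2) * n ^ 2) := by
    rw [← Complex.exp_add]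
    ring_nf
  dsimp only [gaussTheta]
  rw [ofReal_cpow_half_eq_mul k hε, Complex.tsum_exp_neg_mul_int_sq hare, tsum_congr hterm]
  generalize ((ε : ℂ) - 2 * I / k) ^ (1 / 2 : ℂ) = A at ha ⊢
  field_simp

theorem sum_range_cexp_two_pi_I_mul_sq_div :
    ∑ r ∈ range k, cexp (2 * π * I * r ^ 2 / k) = √k * (1 + I) * (1 + (-I) ^ k) / 2 := by
  have h := tendsto_nhds_unique (tendsto_cpow_half_mul_gaussTheta_sum_div k)
    (tendsto_cpow_half_mul_gaussTheta k)
  have hk : (k : ℂ) ≠ 0 := NeZero.ne _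
  have hsqrt : (√k : ℂ) ≠ 0 := by
    exact_mod_cast (Real.sqrt_pos.mpr (Nat.cast_pos.mpr (Nat.pos_of_neZero k))).ne'
  have hkk : (k : ℂ) = √k * √k := by exact_mod_cast (Real.mul_self_sqrt (Nat.cast_nonneg k)).symm
  rw [div_eq_iff hk] at h
  rw [h, hkk]
  field_simp

end GaussSum

theorem Function.Periodic.sum_range_mul {M : Type*} [AddCommMonoid M] {f : ℕ → M} {k : ℕ}
    (hf : Function.Periodic f k) (p : ℕ) :
    ∑ n ∈ range (p * k), f n = p • ∑ n ∈ range k, f n := by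
  induction p with
  | zero => simp
  | succ p ih =>
    rw [add_mul, one_mul, sum_range_add, ih, succ_nsmul]
    congr 1
    exact sum_congr rfl fun n _ ↦ by simpa [add_comm] using hf.nat_mul p n

theorem Function.Periodic.sum_Icc_one_mul {M : Type*} [AddCommMonoid M] {f : ℕ → M} {k : ℕ}
    (hf : Function.Periodic f k) (p : ℕ) :
    ∑ n ∈ Icc 1 (p * k), f n = p • ∑ n ∈ range k, f n := by
  have hshift : Function.Periodic (fun n ↦ f (n + 1)) k := fun n ↦ by
    simpa only [add_right_comm] using hf (n + 1)
  have hrot : ∑ n ∈ range k, f (n + 1) = ∑ n ∈ range k, f n := by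
    cases k with
    | zero => simp
    | succ m =>
      have hm : f (m + 1) = f 0 := by simpa using hf 0
      rw [sum_range_succ (fun n ↦ f (n + 1)), hm, ← sum_range_succ']
  rw [← Ico_add_one_right_eq_Icc, sum_Ico_eq_sum_range, add_tsub_cancel_right]
  simp_rw [add_comm 1]
  rw [hshift.sum_range_mul, hrot]

theorem extended_classical_gauss_sine_sum_general (k p : ℕ) (hk : 0 < k) :
    ∑ n ∈ Finset.Icc 1 (p * k), Real.sin (2 * π * (n : ℝ) ^ 2 / k) =
      ((p : ℝ) / 2) * Real.sqrt (k : ℝ) *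
        (1 + Real.cos ((k : ℝ) * π / 2) - Real.sin ((k : ℝ) * π / 2)) := by
  have := NeZero.of_pos hk
  have hperiodic : Function.Periodic (fun n : ℕ ↦ cexp (2 * π * I * n ^ 2 / k)) k := fun n ↦ by
    simpa using periodic_cexp_two_pi_I_mul_sq_div k n
  have hsin (n : ℕ) : Real.sin (2 * π * n ^ 2 / k) = (cexp (2 * π * I * n ^ 2 / k)).im := by
    rw [show 2 * π * I * n ^ 2 / k = ((2 * π * n ^ 2 / k : ℝ) : ℂ) * I by push_cast; ring,
      exp_ofReal_mul_I_im]
  simp_rw [hsin, ← im_sum, hperiodic.sum_Icc_one_mul, sum_range_cexp_two_pi_I_mul_sq_div,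
    Complex.neg_I_pow, nsmul_eq_mul]
  simp [-ofReal_cos, -ofReal_sin]
  ring

theorem extended_classical_gauss_sine_sum (k p : ℕ) (hk : 0 < k) (hp : 0 < p) :
    ∑ n ∈ Finset.Icc 1 (p * k), Real.sin (2 * π * (n : ℝ) ^ 2 / k) =
      ((p : ℝ) / 2) * Real.sqrt (k : ℝ) *
        (1 + Real.cos ((k : ℝ) * π / 2) - Real.sin ((k : ℝ) * π / 2)) :=
  extended_classical_gauss_sine_sum_general k p hk
end
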